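/- arXiv:1211.1111 — 2 statements merged into one kernel-verified Lean document; each statement's English description precedes it below -/
import Mathlib

section
/- Let 𝔟 be a 6-dimensional 2-step nilpotent real Lie algebra with an invariant nondegenerate symmetric bilinear form such that there exist X, Y with Z := [X,Y] ≠ 0 and (Z, ·) not identically zero on 𝔟. Then with Z* satisfying (Z,Z*)=1, X* := [Z*,Y], Y* := [Z*,X], the six vectors X, Y, Z*, X*, Y*, Z form a basis of 𝔟, and the span of {X*, Y*, Z} equals [𝔟,𝔟] and equals the center 𝔷(𝔟). -/
/-!
Put `u = (X, Y, Z*)` and `v = (X*, Y*, Z) = ([Z*,Y], [Z*,X], [X,Y])`. Invariance and symmetry make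
`B [A,C] D` cyclically symmetric and alternating, so `B (vᵢ, uⱼ)` is diagonal with entries
`-1, 1, 1`, while the `vᵢ`, being brackets, are central and hence orthogonal to every bracket.
Pairing a linear relation first with the `vᵢ` and then with the `uᵢ` shows that the six vectors
are independent, so they are a basis since `dim 𝔟 = 6`. A central element is orthogonal to all
brackets, so the same pairing kills its `u`-coordinates and puts it in `span v`; as brackets are
central, this gives `span v ⊆ [𝔟,𝔟] ⊆ 𝔷(𝔟) ⊆ span v`.
-/

open Submodule

theorem Matrix.range_three {α : Type*} (a b c : α) : Set.range ![a, b, c] = {a, b, c} := by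
  rw [range_cons, range_cons, range_cons_empty, Set.singleton_union, Set.singleton_union]

structure IsIsotropicDual {K V ι : Type*} [CommRing K] [AddCommGroup V] [Module K V]
    (B : LinearMap.BilinForm K V) (u v : ι → V) : Prop where
  isotropic : ∀ i j, B (v i) (v j) = 0
  apply_of_ne : ∀ i j, i ≠ j → B (v i) (u j) = 0
  apply_self_ne_zero : ∀ i, B (v i) (u i) ≠ 0

namespace IsIsotropicDual

variable {K V ι : Type*} [CommRing K] [NoZeroDivisors K] [AddCommGroup V] [Module K V]
  [Fintype ι] {B : LinearMap.BilinForm K V} {u v : ι → V}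

theorem apply_sum (h : IsIsotropicDual B u v) (c : ι ⊕ ι → K) (k : ι) :
    B (v k) (∑ i, c i • Sum.elim u v i) = c (.inl k) * B (v k) (u k) := by
  simp only [Fintype.sum_sum_type, Sum.elim_inl, Sum.elim_inr, map_add, map_sum, map_smul,
    smul_eq_mul, h.isotropic, mul_zero, Finset.sum_const_zero, add_zero]
  exact Finset.sum_eq_single k (fun i _ hik => by rw [h.apply_of_ne k i hik.symm, mul_zero])
    (by simp)

theorem coeff_inl_eq_zero (h : IsIsotropicDual B u v) {c : ι ⊕ ι → K}
    (hc : ∀ k, B (v k) (∑ i, c i • Sum.elim u v i) = 0) (k : ι) : c (.inl k) = 0 :=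
  (mul_eq_zero.1 ((h.apply_sum c k).symm.trans (hc k))).resolve_right (h.apply_self_ne_zero k)

theorem linearIndependent (h : IsIsotropicDual B u v) : LinearIndependent K (Sum.elim u v) := by
  rw [Fintype.linearIndependent_iff]
  intro c hc
  have hu := h.coeff_inl_eq_zero fun k => by rw [hc, map_zero]
  have hv : ∀ k, c (.inr k) = 0 := fun k => by
    have := congrArg (B.flip (u k)) hc
    simp only [Fintype.sum_sum_type, Sum.elim_inl, Sum.elim_inr, hu, zero_smul,
      Finset.sum_const_zero, zero_add, map_sum, map_smul, LinearMap.BilinForm.flip_apply,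
      smul_eq_mul, map_zero] at this
    rw [Finset.sum_eq_single k (fun i _ hik => by rw [h.apply_of_ne i k hik, mul_zero])
      (by simp)] at this
    exact (mul_eq_zero.1 this).resolve_right (h.apply_self_ne_zero k)
  rintro (k | k)
  exacts [hu k, hv k]

theorem mem_span_of_forall_apply_eq_zero (h : IsIsotropicDual B u v)
    (hspan : span K (Set.range (Sum.elim u v)) = ⊤) {w : V} (hw : ∀ k, B (v k) w = 0) :
    w ∈ span K (Set.range v) := by
  obtain ⟨c, rfl⟩ := (mem_span_range_iff_exists_fun K).1 (hspan ▸ mem_top : w ∈ _)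
  simp only [Fintype.sum_sum_type, Sum.elim_inl, Sum.elim_inr, h.coeff_inl_eq_zero hw,
    zero_smul, Finset.sum_const_zero, zero_add]
  exact sum_mem fun i _ => smul_mem _ _ (subset_span ⟨i, rfl⟩)

end IsIsotropicDual

section LieInvariant

variable {R L : Type*} [CommRing R] [LieRing L] [LieAlgebra R L] {B : LinearMap.BilinForm R L}

theorem LieAlgebra.mem_center_iff_forall_lie_eq_zero {W : L} :
    W ∈ (LieAlgebra.center R L).toSubmodule ↔ ∀ U : L, ⁅W, U⁆ = 0 :=
  (LieModule.mem_maxTrivSubmodule R L L W).trans <| forall_congr' fun U => by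
    rw [← lie_skew, neg_eq_zero]

theorem LieAlgebra.span_lie_le_center (h2 : ∀ X Y Z : L, ⁅X, ⁅Y, Z⁆⁆ = 0) :
    span R {W : L | ∃ U V : L, W = ⁅U, V⁆} ≤ (LieAlgebra.center R L).toSubmodule :=
  span_le.2 fun _ ⟨U, V, hW⟩ => (LieModule.mem_maxTrivSubmodule R L L _).2 (hW ▸ h2 · U V)

namespace LinearMap.BilinForm.lieInvariant

theorem apply_lie_eq_zero_of_mem_center (hB : B.lieInvariant L) {W : L}
    (hW : W ∈ LieAlgebra.center R L) (A C : L) : B ⁅A, C⁆ W = 0 := by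
  rw [hB, (LieModule.mem_maxTrivSubmodule R L L W).1 hW, map_zero, neg_zero]

theorem apply_lie_rotate (hB : B.lieInvariant L) (hS : B.IsSymm) (A C D : L) :
    B ⁅A, C⁆ D = B ⁅D, A⁆ C := by
  rw [hB, hS.eq, ← lie_skew, map_neg, LinearMap.neg_apply, neg_neg]

theorem apply_lie_self_left (hB : B.lieInvariant L) (hS : B.IsSymm) (A C : L) :
    B ⁅A, C⁆ A = 0 := by
  rw [hB.apply_lie_rotate hS, lie_self, map_zero, LinearMap.zero_apply]

theorem apply_lie_self_right (hB : B.lieInvariant L) (hS : B.IsSymm) (A C : L) :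
    B ⁅A, C⁆ C = 0 := by
  rw [hB.apply_lie_rotate hS, hB.apply_lie_self_left hS]

theorem isIsotropicDual [Nontrivial R] (hB : B.lieInvariant L) (hS : B.IsSymm)
    (h2 : ∀ X Y Z : L, ⁅X, ⁅Y, Z⁆⁆ = 0) {X Y Zstar : L} (hpair : B ⁅X, Y⁆ Zstar = 1) :
    IsIsotropicDual B ![X, Y, Zstar] ![⁅Zstar, Y⁆, ⁅Zstar, X⁆, ⁅X, Y⁆] where
  isotropic i j := by
    fin_cases i <;> fin_cases j <;> exact hB.apply_lie_eq_zero_of_mem_center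
      ((LieModule.mem_maxTrivSubmodule R L L _).2 (h2 · _ _)) _ _
  apply_of_ne i j hij := by
    fin_cases i <;> fin_cases j <;> first
      | exact absurd rfl hij
      | exact hB.apply_lie_self_left hS _ _
      | exact hB.apply_lie_self_right hS _ _
  apply_self_ne_zero i := by
    have hXstar : B ⁅Zstar, Y⁆ X = -1 := by
      rw [hB.apply_lie_rotate hS, hB.apply_lie_rotate hS, ← lie_skew, map_neg,
        LinearMap.neg_apply, hpair]
    have hYstar : B ⁅Zstar, X⁆ Y = 1 := by
      rw [hB.apply_lie_rotate hS, hB.apply_lie_rotate hS, hpair]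
    fin_cases i
    · simp [hXstar]
    · simp [hYstar]
    · simp [hpair]

end LinearMap.BilinForm.lieInvariant

theorem IsIsotropicDual.center_le_span [NoZeroDivisors R] {ι : Type*} [Fintype ι] {u v : ι → L}
    (h : IsIsotropicDual B u v) (hB : B.lieInvariant L)
    (hspan : span R (Set.range (Sum.elim u v)) = ⊤) (hv : ∀ i, ∃ A C : L, v i = ⁅A, C⁆) :
    (LieAlgebra.center R L).toSubmodule ≤ span R (Set.range v) := fun W hW =>
  h.mem_span_of_forall_apply_eq_zero hspan fun k => by
    obtain ⟨A, C, hk⟩ := hv k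
    rw [hk]
    exact hB.apply_lie_eq_zero_of_mem_center hW A C

end LieInvariant

theorem stmt_12_general {L : Type*} [LieRing L] [LieAlgebra ℝ L] [FiniteDimensional ℝ L]
    (hdim : Module.finrank ℝ L = 6)
    (B : LinearMap.BilinForm ℝ L)
    (hsymm : ∀ X Y : L, B X Y = B Y X)
    (h2 : ∀ X Y Z : L, ⁅X, ⁅Y, Z⁆⁆ = 0)
    (hinv : ∀ X Y Z : L, B ⁅X, Y⁆ Z = - B Y ⁅X, Z⁆)
    (X Y Zstar : L)
    (hpair : B ⁅X, Y⁆ Zstar = 1) :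
    LinearIndependent ℝ ![X, Y, Zstar, ⁅Zstar, Y⁆, ⁅Zstar, X⁆, ⁅X, Y⁆] ∧
    Submodule.span ℝ (Set.range ![X, Y, Zstar, ⁅Zstar, Y⁆, ⁅Zstar, X⁆, ⁅X, Y⁆]) = ⊤ ∧
    Submodule.span ℝ ({⁅Zstar, Y⁆, ⁅Zstar, X⁆, ⁅X, Y⁆} : Set L)
      = Submodule.span ℝ {W : L | ∃ U V : L, W = ⁅U, V⁆} ∧
    (∀ W : L, W ∈ Submodule.span ℝ ({⁅Zstar, Y⁆, ⁅Zstar, X⁆, ⁅X, Y⁆} : Set L)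
      ↔ ∀ U : L, ⁅W, U⁆ = 0) := by
  have hB : B.lieInvariant L := hinv
  have hdual := hB.isIsotropicDual ⟨hsymm⟩ h2 hpair
  have hb : ![X, Y, Zstar, ⁅Zstar, Y⁆, ⁅Zstar, X⁆, ⁅X, Y⁆]
      = Sum.elim ![X, Y, Zstar] ![⁅Zstar, Y⁆, ⁅Zstar, X⁆, ⁅X, Y⁆] ∘ finSumFinEquiv.symm := by
    funext i; fin_cases i <;> rfl
  have hli : LinearIndependent ℝ ![X, Y, Zstar, ⁅Zstar, Y⁆, ⁅Zstar, X⁆, ⁅X, Y⁆] :=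
    hb ▸ (linearIndependent_equiv _).2 hdual.linearIndependent
  have hspan := hli.span_eq_top_of_card_eq_finrank (by simpa using hdim.symm)
  have hSD : span ℝ ({⁅Zstar, Y⁆, ⁅Zstar, X⁆, ⁅X, Y⁆} : Set L)
      ≤ span ℝ {W : L | ∃ U V : L, W = ⁅U, V⁆} :=
    span_mono <| by rintro _ (rfl | rfl | rfl) <;> exact ⟨_, _, rfl⟩
  have hDZ := LieAlgebra.span_lie_le_center (R := ℝ) h2
  have hZS : (LieAlgebra.center ℝ L).toSubmodule
      ≤ span ℝ ({⁅Zstar, Y⁆, ⁅Zstar, X⁆, ⁅X, Y⁆} : Set L) := by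
    rw [← Matrix.range_three]
    exact hdual.center_le_span hB (by rw [← hspan, hb, EquivLike.range_comp])
      (by intro i; fin_cases i <;> exact ⟨_, _, rfl⟩)
  exact ⟨hli, hspan, le_antisymm hSD (hDZ.trans hZS), fun W =>
    ⟨fun hW => LieAlgebra.mem_center_iff_forall_lie_eq_zero.1 (hDZ (hSD hW)),
      fun hW => hZS (LieAlgebra.mem_center_iff_forall_lie_eq_zero.2 hW)⟩⟩

/-- In a 6-dimensional 2-step nilpotent real Lie algebra with a nondegenerate
invariant symmetric bilinear form, if `Z = [X,Y] ≠ 0`, `(Z,·) ≢ 0` and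
`(Z,Z*) = 1`, then with `X* = [Z*,Y]`, `Y* = [Z*,X]` the six vectors
`X, Y, Z*, X*, Y*, Z` form a basis, and `span{X*,Y*,Z} = [𝔟,𝔟] = 𝔷(𝔟)`. -/
theorem stmt_12 {L : Type*} [LieRing L] [LieAlgebra ℝ L] [FiniteDimensional ℝ L]
    (hdim : Module.finrank ℝ L = 6)
    (B : LinearMap.BilinForm ℝ L)
    (hsymm : ∀ X Y : L, B X Y = B Y X)
    (h2 : ∀ X Y Z : L, ⁅X, ⁅Y, Z⁆⁆ = 0)
    (hinv : ∀ X Y Z : L, B ⁅X, Y⁆ Z = - B Y ⁅X, Z⁆)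
    (hnd : ∀ V : L, (∀ W : L, B V W = 0) → V = 0)
    (X Y Zstar : L) (hZ : ⁅X, Y⁆ ≠ 0)
    (hBZ : ∃ W : L, B ⁅X, Y⁆ W ≠ 0)
    (hpair : B ⁅X, Y⁆ Zstar = 1) :
    LinearIndependent ℝ ![X, Y, Zstar, ⁅Zstar, Y⁆, ⁅Zstar, X⁆, ⁅X, Y⁆] ∧
    Submodule.span ℝ (Set.range ![X, Y, Zstar, ⁅Zstar, Y⁆, ⁅Zstar, X⁆, ⁅X, Y⁆]) = ⊤ ∧
    Submodule.span ℝ ({⁅Zstar, Y⁆, ⁅Zstar, X⁆, ⁅X, Y⁆} : Set L)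
      = Submodule.span ℝ {W : L | ∃ U V : L, W = ⁅U, V⁆} ∧
    (∀ W : L, W ∈ Submodule.span ℝ ({⁅Zstar, Y⁆, ⁅Zstar, X⁆, ⁅X, Y⁆} : Set L)
      ↔ ∀ U : L, ⁅W, U⁆ = 0) :=
  stmt_12_general hdim B hsymm h2 hinv X Y Zstar hpair
end

section
/- Let 𝔤 be a nonabelian 2-step nilpotent Lie algebra with a nondegenerate invariant symmetric bilinear form (·,·). Then dim 𝔤 ≥ 6. -/
/-!
Invariance of the form and its nondegeneracy make the center `𝔷` the orthogonal complement of
the derived algebra `[𝔤, 𝔤]`, so `dim 𝔤 / 𝔷 = dim [𝔤, 𝔤] =: c`. The bracket factors through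
`Λ² (𝔤 / 𝔷)`, hence `c ≤ c (c - 1) / 2`, which together with `c ≥ 1` forces `c ≥ 3`. Since the
algebra is 2-step nilpotent, `[𝔤, 𝔤] ⊆ 𝔷`, and so `dim 𝔤 = dim 𝔷 + c ≥ 2 c ≥ 6`.
-/

open Module Submodule LieAlgebra

section

variable {R L : Type*} [CommRing R] [LieRing L] [LieAlgebra R L]

theorem orthogonal_derived_eq_center {Φ : LinearMap.BilinForm R L} (hΦ : Φ.lieInvariant L)
    (hsep : Φ.SeparatingRight) :
    Φ.orthogonal (⁅(⊤ : LieIdeal R L), ⊤⁆ : LieIdeal R L).toSubmodule =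
      (center R L).toSubmodule := by
  ext V
  simp only [LinearMap.BilinForm.mem_orthogonal_iff, LieSubmodule.mem_toSubmodule,
    LieModule.mem_maxTrivSubmodule]
  constructor
  · intro hV x
    refine hsep _ fun y => ?_
    rw [← neg_eq_zero, ← hΦ]
    exact hV _ (LieSubmodule.lie_mem_lie (LieSubmodule.mem_top x) (LieSubmodule.mem_top y))
  · intro hV n hn
    rw [← LieSubmodule.mem_toSubmodule, LieSubmodule.lieIdeal_oper_eq_linear_span'] at hn
    induction hn using Submodule.span_induction with
    | mem m hm =>
      obtain ⟨x, -, y, -, rfl⟩ := hm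
      rw [hΦ, hV, map_zero, neg_zero]
    | zero => simp
    | add a b _ _ ha hb => rw [map_add, LinearMap.add_apply, ha, hb, add_zero]
    | smul r a _ ha => rw [map_smul, LinearMap.smul_apply, ha, smul_zero]

theorem lie_mem_span_lie_lt {ι : Type*} [LinearOrder ι] (X : ι → L) {a b : L}
    (ha : a ∈ span R (Set.range X)) (hb : b ∈ span R (Set.range X)) :
    ⁅a, b⁆ ∈ span R {c | ∃ i j, i < j ∧ ⁅X i, X j⁆ = c} := by
  set S := span R {c | ∃ i j, i < j ∧ ⁅X i, X j⁆ = c}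
  induction ha, hb using Submodule.span_induction₂ with
  | mem_mem x y hx hy =>
    obtain ⟨i, rfl⟩ := hx
    obtain ⟨j, rfl⟩ := hy
    rcases lt_trichotomy i j with hij | rfl | hji
    · exact subset_span ⟨i, j, hij, rfl⟩
    · rw [lie_self]; exact S.zero_mem
    · rw [← lie_skew]; exact S.neg_mem (subset_span ⟨j, i, hji, rfl⟩)
  | zero_left y _ => rw [zero_lie]; exact S.zero_mem
  | zero_right x _ => rw [lie_zero]; exact S.zero_mem
  | add_left x y z _ _ _ h₁ h₂ => rw [add_lie]; exact S.add_mem h₁ h₂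
  | add_right x y z _ _ _ h₁ h₂ => rw [lie_add]; exact S.add_mem h₁ h₂
  | smul_left r x y _ _ h => rw [smul_lie]; exact S.smul_mem r h
  | smul_right r x y _ _ h => rw [lie_smul]; exact S.smul_mem r h

theorem lie_mem_span_lie_lt_of_center_sup_eq_top {ι : Type*} [LinearOrder ι] (X : ι → L)
    (hX : (center R L).toSubmodule ⊔ span R (Set.range X) = ⊤) (a b : L) :
    ⁅a, b⁆ ∈ span R {c | ∃ i j, i < j ∧ ⁅X i, X j⁆ = c} := by
  obtain ⟨z, hz, u, hu, rfl⟩ := mem_sup.1 (hX ▸ mem_top : a ∈ _ ⊔ _)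
  obtain ⟨z', hz', v, hv, rfl⟩ := mem_sup.1 (hX ▸ mem_top : b ∈ _ ⊔ _)
  rw [LieSubmodule.mem_toSubmodule, LieModule.mem_maxTrivSubmodule] at hz hz'
  have hcentral : ⁅z + u, z' + v⁆ = ⁅u, v⁆ := by
    have hzv : ⁅z, v⁆ = 0 := by rw [← lie_skew, hz, neg_zero]
    rw [add_lie, lie_add, lie_add, hz', hz', hzv, zero_add, zero_add, zero_add]
  exact hcentral ▸ lie_mem_span_lie_lt X hu hv

variable {K : Type*} [Field K] [LieAlgebra K L]

theorem finrank_span_lie_lt_le_choose_two {ι : Type*} [Fintype ι] [LinearOrder ι] (X : ι → L) :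
    finrank K (span K {c | ∃ i j, i < j ∧ ⁅X i, X j⁆ = c}) ≤ (Fintype.card ι).choose 2 := by
  classical
  have hset : {c | ∃ i j, i < j ∧ ⁅X i, X j⁆ = c} =
      (Finset.image (fun p : ι × ι => ⁅X p.1, X p.2⁆) {p | p.1 < p.2} : Set L) := by
    ext c
    simp
  rw [hset, ← Fintype.card_product_filter_lt]
  exact (finrank_span_finset_le_card _).trans Finset.card_image_le

theorem finrank_derived_le_choose_two [FiniteDimensional K L] :
    finrank K (⁅(⊤ : LieIdeal K L), ⊤⁆ : LieIdeal K L).toSubmodule ≤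
      (finrank K L - finrank K (center K L).toSubmodule).choose 2 := by
  obtain ⟨W, hW⟩ := (center K L).toSubmodule.exists_isCompl
  let b := finBasis K W
  have hspan : span K (Set.range fun i => (b i : L)) = W := by
    rw [Set.range_comp', ← W.coe_subtype, ← map_span, b.span_eq, Submodule.map_top,
      range_subtype]
  have hdim : finrank K L - finrank K (center K L).toSubmodule =
      Fintype.card (Fin (finrank K W)) := by
    rw [← finrank_add_eq_of_isCompl hW, Fintype.card_fin]
    omega
  rw [hdim]
  refine le_trans (finrank_mono ?_) (finrank_span_lie_lt_le_choose_two fun i => (b i : L))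
  rw [LieSubmodule.lieIdeal_oper_eq_linear_span', span_le]
  rintro _ ⟨x, -, y, -, rfl⟩
  exact lie_mem_span_lie_lt_of_center_sup_eq_top _ (hspan.symm ▸ hW.sup_eq_top) x y

end

theorem Nat.three_le_of_le_choose_two {c : ℕ} (hpos : 0 < c) (h : c ≤ c.choose 2) : 3 ≤ c := by
  by_contra! hc
  interval_cases c <;> simp_all

/-- A non-abelian 2-step nilpotent Lie algebra with a nondegenerate invariant
symmetric bilinear form has dimension at least 6. -/
theorem stmt_18 {L : Type*} [LieRing L] [LieAlgebra ℝ L] [FiniteDimensional ℝ L]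
    (B : LinearMap.BilinForm ℝ L)
    (hsymm : ∀ X Y : L, B X Y = B Y X)
    (h2 : ∀ X Y Z : L, ⁅X, ⁅Y, Z⁆⁆ = 0)
    (hinv : ∀ X Y Z : L, B ⁅X, Y⁆ Z = - B Y ⁅X, Z⁆)
    (hnab : ∃ X Y : L, ⁅X, Y⁆ ≠ 0)
    (hnd : ∀ V : L, (∀ W : L, B V W = 0) → V = 0) :
    6 ≤ Module.finrank ℝ L := by
  set C := (⁅(⊤ : LieIdeal ℝ L), ⊤⁆ : LieIdeal ℝ L)
  have hB : B.Nondegenerate := ⟨hnd, fun V hV => hnd V fun W => hsymm V W ▸ hV W⟩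
  have hZ : finrank ℝ (center ℝ L).toSubmodule = finrank ℝ L - finrank ℝ C.toSubmodule := by
    rw [← orthogonal_derived_eq_center hinv hB.2, LinearMap.BilinForm.finrank_orthogonal hB]
  have hCZ : C ≤ center ℝ L := (LieSubmodule.lie_le_iff _ _ _).2 fun x _ y _ =>
    (LieModule.mem_maxTrivSubmodule _ _ _ _).2 fun X => h2 X x y
  have hC_pos : 0 < finrank ℝ C.toSubmodule := by
    obtain ⟨X, Y, hXY⟩ := hnab
    exact finrank_pos_iff_exists_ne_zero.2 ⟨⟨_, LieSubmodule.lie_mem_lie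
      (LieSubmodule.mem_top X) (LieSubmodule.mem_top Y)⟩, by simpa using hXY⟩
  have hC_le_Z := finrank_mono ((LieSubmodule.toSubmodule_le_toSubmodule _ _).2 hCZ)
  have hC_le_L := Submodule.finrank_le C.toSubmodule
  have hquot : finrank ℝ L - finrank ℝ (center ℝ L).toSubmodule = finrank ℝ C.toSubmodule := by
    omega
  have hC_three := Nat.three_le_of_le_choose_two hC_pos (hquot ▸ finrank_derived_le_choose_two)
  omega
end
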